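/- Let p ≥ 2 and m ≤ −1 be integers, and let Q(p,m) be the p×p symmetric integer matrix with diagonal entries (−(p+2), −2, …, −2, m−1) (with p−2 entries equal to −2), entries 1 on the super- and sub-diagonal, and 0 elsewhere. Then there is no vector v ∈ ℤ^p with vᵀ Q(p,m) v = −1. -/

import Mathlib

/-- The `p × p` symmetric integer matrix with diagonal entries
`(-(p+2), -2, …, -2, m-1)` (with `p-2` entries equal to `-2`),
entries `1` on the super- and sub-diagonal, and `0` elsewhere. -/
def Qmat (p : ℕ) (m : ℤ) : Matrix (Fin p) (Fin p) ℤ :=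
  Matrix.of fun i j =>
    if i = j then
      if (i : ℕ) = 0 then -((p : ℤ) + 2)
      else if (i : ℕ) = p - 1 then m - 1
      else -2
    else if (i : ℕ) + 1 = (j : ℕ) ∨ (j : ℕ) + 1 = (i : ℕ) then 1
    else 0

/-!
Completing squares along the chain gives
`-vᵀ Q(p,m) v = (p+1) v₀² + ∑ᵢ (vᵢ - vᵢ₊₁)² + (-m) v_{p-1}²`, a sum of nonnegative terms.
If it equals `1`, then `v₀ = 0` because `p + 1 ≥ 3`, so the differences `vᵢ - vᵢ₊₁` sum to
`-v_{p-1}`. If `v_{p-1} ≠ 0`, the squared differences and the last term each contribute at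
least `1`; if `v_{p-1} = 0`, the squared differences sum to an even number, as `x² ≡ x mod 2`.
-/

open Finset Matrix

namespace Fin

variable {R : Type*} [CommRing R] {n : ℕ}

theorem sum_castSucc_sub_succ (v : Fin (n + 1) → R) :
    ∑ i : Fin n, (v i.castSucc - v i.succ) = v 0 - v (last n) := by
  rw [sum_sub_distrib]
  linear_combination sum_univ_succ v - sum_univ_castSucc v

theorem two_mul_sum_sq_sub_two_mul_sum_mul_succ (v : Fin (n + 1) → R) :
    2 * ∑ i, v i ^ 2 - 2 * ∑ i : Fin n, v i.castSucc * v i.succ =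
      v 0 ^ 2 + ∑ i : Fin n, (v i.castSucc - v i.succ) ^ 2 + v (last n) ^ 2 := by
  have hexpand : ∑ i : Fin n, (v i.castSucc - v i.succ) ^ 2 = ∑ i : Fin n, v i.castSucc ^ 2 +
      ∑ i : Fin n, v i.succ ^ 2 - 2 * ∑ i : Fin n, v i.castSucc * v i.succ := by
    simp only [sub_sq, sum_add_distrib, sum_sub_distrib, mul_sum, mul_assoc]
    ring
  rw [hexpand]
  linear_combination sum_univ_succ (v · ^ 2) + sum_univ_castSucc (v · ^ 2)

end Fin

namespace Int

variable {ι : Type*}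

theorem sum_sq_modEq_sum (s : Finset ι) (f : ι → ℤ) :
    ∑ i ∈ s, f i ^ 2 ≡ ∑ i ∈ s, f i [ZMOD 2] :=
  ModEq.sum fun i _ => modEq_iff_dvd.2 <| by
    simpa only [sq, mul_sub, mul_one, neg_sub] using
      (even_mul_pred_self (f i)).two_dvd.neg_right

theorem abs_sum_le_sum_sq (s : Finset ι) (f : ι → ℤ) : |∑ i ∈ s, f i| ≤ ∑ i ∈ s, f i ^ 2 :=
  (abs_sum_le_sum_abs f s).trans <| sum_le_sum fun i _ => by
    simpa only [natCast_natAbs] using natAbs_le_self_sq (f i)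

theorem sum_sq_add_mul_sq_sum_ne_one (s : Finset ι) (f : ι → ℤ) {c : ℤ} (hc : 1 ≤ c) :
    ∑ i ∈ s, f i ^ 2 + c * (∑ i ∈ s, f i) ^ 2 ≠ 1 := by
  intro h
  by_cases hsum : ∑ i ∈ s, f i = 0
  · have hparity := sum_sq_modEq_sum s f
    rw [hsum, show ∑ i ∈ s, f i ^ 2 = 1 by simpa [hsum] using h] at hparity
    exact absurd hparity (by decide)
  · have hsq : 1 ≤ (∑ i ∈ s, f i) ^ 2 := by
      nlinarith [one_le_abs hsum, sq_abs (∑ i ∈ s, f i)]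
    have := (one_le_abs hsum).trans (abs_sum_le_sum_sq s f)
    nlinarith

end Int

namespace Matrix

variable {R : Type*} [CommRing R] {n : ℕ}

def linearPlumbing (d : Fin n → R) : Matrix (Fin n) (Fin n) R :=
  of fun i j => if i = j then d i else if (i : ℕ) + 1 = j ∨ (j : ℕ) + 1 = i then 1 else 0

def superdiagonalOnes (n : ℕ) : Matrix (Fin n) (Fin n) R :=
  of fun i j => if (i : ℕ) + 1 = j then 1 else 0

theorem linearPlumbing_eq (d : Fin n → R) :
    linearPlumbing d = diagonal d + superdiagonalOnes n + (superdiagonalOnes n)ᵀ := by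
  ext i j
  simp only [linearPlumbing, superdiagonalOnes, add_apply, diagonal_apply, transpose_apply,
    of_apply, Fin.ext_iff]
  split_ifs <;> first | omega | simp

theorem superdiagonalOnes_mulVec_castSucc (v : Fin (n + 1) → R) (i : Fin n) :
    (superdiagonalOnes (n + 1) *ᵥ v) i.castSucc = v i.succ := by
  simp only [mulVec, dotProduct, superdiagonalOnes, of_apply, ite_mul, one_mul, zero_mul]
  rw [Fintype.sum_eq_single i.succ]
  · simp
  · intro j hj
    rw [if_neg]
    simpa [Fin.ext_iff, eq_comm] using hj

theorem superdiagonalOnes_mulVec_last (v : Fin (n + 1) → R) :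
    (superdiagonalOnes (n + 1) *ᵥ v) (Fin.last n) = 0 := by
  simp only [mulVec, dotProduct, superdiagonalOnes, of_apply, Fin.val_last, ite_mul, one_mul,
    zero_mul]
  exact sum_eq_zero fun j _ => if_neg j.isLt.ne'

theorem dotProduct_superdiagonalOnes_mulVec (v : Fin (n + 1) → R) :
    v ⬝ᵥ (superdiagonalOnes (n + 1) *ᵥ v) = ∑ i : Fin n, v i.castSucc * v i.succ := by
  rw [dotProduct, Fin.sum_univ_castSucc, superdiagonalOnes_mulVec_last, mul_zero, add_zero]
  simp only [superdiagonalOnes_mulVec_castSucc]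

theorem dotProduct_linearPlumbing_mulVec (d v : Fin (n + 1) → R) :
    v ⬝ᵥ (linearPlumbing d *ᵥ v) =
      ∑ i, d i * v i ^ 2 + 2 * ∑ i : Fin n, v i.castSucc * v i.succ := by
  have hdiag : v ⬝ᵥ (diagonal d *ᵥ v) = ∑ i, d i * v i ^ 2 :=
    sum_congr rfl fun i _ => by rw [mulVec_diagonal]; ring
  have htranspose : v ⬝ᵥ ((superdiagonalOnes (n + 1))ᵀ *ᵥ v) =
      v ⬝ᵥ (superdiagonalOnes (n + 1) *ᵥ v) := by
    rw [dotProduct_mulVec, vecMul_transpose, dotProduct_comm]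
  rw [linearPlumbing_eq, add_mulVec, add_mulVec, dotProduct_add, dotProduct_add, htranspose,
    hdiag, dotProduct_superdiagonalOnes_mulVec]
  ring

theorem neg_dotProduct_linearPlumbing_mulVec (d v : Fin (n + 1) → R) :
    -(v ⬝ᵥ (linearPlumbing d *ᵥ v)) = v 0 ^ 2 + ∑ i : Fin n, (v i.castSucc - v i.succ) ^ 2 +
      v (Fin.last n) ^ 2 - ∑ i, (d i + 2) * v i ^ 2 := by
  rw [dotProduct_linearPlumbing_mulVec, ← Fin.two_mul_sum_sq_sub_two_mul_sum_mul_succ]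
  simp only [add_mul, sum_add_distrib, ← mul_sum]
  ring

end Matrix

theorem Qmat_eq_linearPlumbing (p : ℕ) (m : ℤ) :
    Qmat p m = linearPlumbing fun i =>
      if (i : ℕ) = 0 then -((p : ℤ) + 2) else if (i : ℕ) = p - 1 then m - 1 else -2 :=
  rfl

theorem neg_dotProduct_Qmat_mulVec (n : ℕ) (m : ℤ) (v : Fin (n + 2) → ℤ) :
    -(v ⬝ᵥ (Qmat (n + 2) m *ᵥ v)) = (n + 3) * v 0 ^ 2 +
      ∑ i : Fin (n + 1), (v i.castSucc - v i.succ) ^ 2 + -m * v (Fin.last (n + 1)) ^ 2 := by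
  rw [Qmat_eq_linearPlumbing, neg_dotProduct_linearPlumbing_mulVec,
    Fintype.sum_eq_add 0 (Fin.last (n + 1)) (Fin.ext_iff.not.2 (by simp))]
  · simp only [Fin.coe_ofNat_eq_mod, Nat.zero_mod, ↓reduceIte, Nat.cast_add, Nat.cast_ofNat,
      neg_add_rev, Int.reduceNeg, neg_add_cancel_comm, Fin.val_last, Nat.add_eq_zero_iff,
      one_ne_zero, and_false, Nat.add_one_sub_one, neg_mul]
    ring
  · rintro i ⟨hi0, hilast⟩
    have h0 : (i : ℕ) ≠ 0 := fun h => hi0 (Fin.ext h)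
    have hl : (i : ℕ) ≠ n + 2 - 1 := fun h => hilast (Fin.ext (by simp [h]))
    rw [if_neg h0, if_neg hl]
    ring

theorem Qmat_no_minus_one_class_negdef (p : ℕ) (hp : 2 ≤ p) (m : ℤ) (hm : m ≤ -1) :
    ¬ ∃ v : Fin p → ℤ, dotProduct v ((Qmat p m).mulVec v) = -1 := by
  rintro ⟨v, hv⟩
  obtain ⟨n, rfl⟩ : ∃ n, p = n + 2 := ⟨p - 2, by omega⟩
  have hform := neg_dotProduct_Qmat_mulVec n m v
  rw [hv, neg_neg] at hform
  have hdiff : 0 ≤ ∑ i : Fin (n + 1), (v i.castSucc - v i.succ) ^ 2 :=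
    sum_nonneg fun i _ => sq_nonneg _
  have hv0 : v 0 = 0 := by
    nlinarith [sq_nonneg (v 0), sq_nonneg (v (Fin.last (n + 1)))]
  rw [hv0] at hform
  refine Int.sum_sq_add_mul_sq_sum_ne_one univ (fun i : Fin (n + 1) => v i.castSucc - v i.succ)
    (c := -m) (by omega) ?_
  rw [Fin.sum_castSucc_sub_succ, hv0]
  linear_combination -hform
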